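/- arXiv:1808.07676 — 3 statements merged into one kernel-verified Lean document; each statement's English description precedes it below -/
import Mathlib

section
/- Let a and D be coprime integers both greater than 1. For each prime q dividing D, let m_q be the largest integer such that a^(e_q) ≡ 1 (mod q^(m_q)), where e_q is the order of a modulo q if q is odd, and modulo 4 if q = 2. Let m be the maximum of the m_q. Then for every positive integer b dividing some power of D, the multiplicative order of a in (Z/bZ)^* is at least b·D^(−m). -/
/-!
Let `t` be the order of `a` modulo `b` and, for a prime `q ∣ b`, let `e` be the order of `a`
modulo `q` (modulo `4` if `q = 2`). Since `b ∣ a ^ t - 1`, it suffices to bound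
`v_q(a ^ t - 1) ≤ v_q(a ^ e - 1) + v_q(t) ≤ m + v_q(t)`. If `e ∣ t` this is lifting the exponent
for `x = a ^ e`, which is `1` modulo `q` (modulo `4` if `q = 2`); otherwise `a ^ t - 1` is not
even divisible by that modulus, which does divide `a ^ e - 1`. Hence `b ∣ D ^ m * t`.
-/

theorem natCast_pow_eq_one_iff_dvd {a n t : ℕ} (ha : 0 < a) :
    (a : ZMod n) ^ t = 1 ↔ n ∣ a ^ t - 1 := by
  rw [← Nat.cast_pow, ← Nat.cast_one, ZMod.natCast_eq_natCast_iff, Nat.ModEq.comm,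
    Nat.modEq_iff_dvd' (Nat.one_le_pow _ _ ha)]

theorem orderOf_natCast_pos {a n : ℕ} [NeZero n] (h : a.Coprime n) :
    0 < orderOf (a : ZMod n) := by
  rw [← ZMod.coe_unitOfCoprime a h, orderOf_units]
  exact orderOf_pos _

theorem padicValNat.two_pow_sub_one_of_four_dvd {x n : ℕ} (hx : 1 < x) (h4 : 4 ∣ x - 1)
    (hn : n ≠ 0) :
    padicValNat 2 (x ^ n - 1) = padicValNat 2 (x - 1) + padicValNat 2 n := by
  have hxn : x ^ n - 1 ≠ 0 := Nat.sub_ne_zero_of_lt (Nat.one_lt_pow hn hx)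
  rw [← Nat.cast_inj (R := ℕ∞), Nat.cast_add, padicValNat_eq_emultiplicity hn,
    padicValNat_eq_emultiplicity hxn, padicValNat_eq_emultiplicity (Nat.sub_ne_zero_of_lt hx),
    ← Int.natCast_emultiplicity, ← Int.natCast_emultiplicity, ← Int.natCast_emultiplicity]
  push_cast [Nat.one_le_pow _ _ (by omega : 0 < x), hx.le]
  have h4' : (4 : ℤ) ∣ x - 1 := by simpa [hx.le] using Int.natCast_dvd_natCast.mpr h4
  simpa using Int.two_pow_sub_pow' (y := 1) n h4' (by omega)

theorem padicValNat.pow_sub_one {q x n : ℕ} [hq : Fact q.Prime] (hx : 1 < x) (hqx : q ∣ x - 1)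
    (h4 : q = 2 → 4 ∣ x - 1) (hn : n ≠ 0) :
    padicValNat q (x ^ n - 1) = padicValNat q (x - 1) + padicValNat q n := by
  rcases hq.out.eq_two_or_odd' with rfl | hodd
  · exact two_pow_sub_one_of_four_dvd hx (h4 rfl) hn
  · have hqx' : ¬ q ∣ x := fun h =>
      hq.out.not_dvd_one ((Nat.dvd_sub_iff_right hx.le h).mp hqx)
    simpa using pow_sub_pow hodd hx (by simpa using hqx) hqx' hn

theorem padicValNat_pow_sub_one_le {q r a t : ℕ} [hq : Fact q.Prime] (hr : r ≠ 0)
    (h2 : q = 2 → 2 ≤ r) (ha : 1 < a) (hqa : ¬ q ∣ a) (ht : t ≠ 0) :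
    padicValNat q (a ^ t - 1) ≤
      padicValNat q (a ^ orderOf (a : ZMod (q ^ r)) - 1) + padicValNat q t := by
  set e := orderOf (a : ZMod (q ^ r))
  have he : e ≠ 0 := (orderOf_natCast_pos
    ((Nat.coprime_comm.mp ((Nat.Prime.coprime_iff_not_dvd hq.out).2 hqa)).pow_right r)).ne'
  have hne : ∀ {n}, n ≠ 0 → a ^ n - 1 ≠ 0 := fun hn =>
    Nat.sub_ne_zero_of_lt (Nat.one_lt_pow hn ha)
  have hqr : q ^ r ∣ a ^ e - 1 :=
    (natCast_pow_eq_one_iff_dvd (by omega)).mp (pow_orderOf_eq_one _)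
  by_cases het : e ∣ t
  · obtain ⟨s, rfl⟩ := het
    have h4 : q = 2 → 4 ∣ a ^ e - 1 := by
      rintro rfl
      exact (pow_dvd_pow 2 (h2 rfl)).trans hqr
    rw [pow_mul, padicValNat.pow_sub_one (Nat.one_lt_pow he ha) ((dvd_pow_self q hr).trans hqr)
      h4 (right_ne_zero_of_mul ht), padicValNat.mul he (right_ne_zero_of_mul ht)]
    omega
  · have hqt : ¬ q ^ r ∣ a ^ t - 1 := by
      rwa [← natCast_pow_eq_one_iff_dvd (by omega), ← orderOf_dvd_iff_pow_eq_one]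
    rw [padicValNat_dvd_iff_le (hne ht)] at hqt
    rw [padicValNat_dvd_iff_le (hne he)] at hqr
    omega

theorem padicValNat_le_add_padicValNat_orderOf {q r a b : ℕ} [hq : Fact q.Prime] [NeZero b]
    (hr : r ≠ 0) (h2 : q = 2 → 2 ≤ r) (ha : 1 < a) (hab : a.Coprime b) :
    padicValNat q b ≤ padicValNat q (a ^ orderOf (a : ZMod (q ^ r)) - 1) +
      padicValNat q (orderOf (a : ZMod b)) := by
  by_cases hqb : q ∣ b
  · set t := orderOf (a : ZMod b)
    have ht : t ≠ 0 := (orderOf_natCast_pos hab).ne'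
    have hbt : b ∣ a ^ t - 1 := (natCast_pow_eq_one_iff_dvd (by omega)).mp (pow_orderOf_eq_one _)
    have hqa : ¬ q ∣ a := fun hqa => hq.out.not_dvd_one (hab ▸ Nat.dvd_gcd hqa hqb)
    calc padicValNat q b ≤ padicValNat q (a ^ t - 1) :=
          padicValNat_dvd_iff_le (Nat.sub_ne_zero_of_lt (Nat.one_lt_pow ht ha)) |>.mp
            (pow_padicValNat_dvd.trans hbt)
      _ ≤ _ := padicValNat_pow_sub_one_le hr h2 ha hqa ht
  · simp [padicValNat.eq_zero_of_not_dvd hqb]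

theorem padicValNat_le_of_not_pow_succ_dvd {p n k : ℕ} [Fact p.Prime] (h : ¬ p ^ (k + 1) ∣ n) :
    padicValNat p n ≤ k := by
  by_contra! hk
  exact h ((padicValNat_dvd_iff _ _).mpr (Or.inr hk))

theorem dvd_pow_mul_orderOf {a b D m k : ℕ} [NeZero b] (ha : 1 < a) (hD : D ≠ 0)
    (hab : a.Coprime b) (hbD : b ∣ D ^ k)
    (hm : ∀ q ∈ D.primeFactors,
      padicValNat q (a ^ orderOf (a : ZMod (if q = 2 then 4 else q)) - 1) ≤ m) :
    b ∣ D ^ m * orderOf (a : ZMod b) := by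
  have ht : orderOf (a : ZMod b) ≠ 0 := (orderOf_natCast_pos hab).ne'
  rw [← Nat.factorization_prime_le_iff_dvd (NeZero.ne b) (by positivity)]
  intro q hq
  have : Fact q.Prime := ⟨hq⟩
  by_cases hqb : q ∣ b
  · have hqD : q ∣ D := hq.dvd_of_dvd_pow (hqb.trans hbD)
    obtain ⟨r, hr, h2, hqr⟩ :
        ∃ r, r ≠ 0 ∧ (q = 2 → 2 ≤ r) ∧ (if q = 2 then 4 else q) = q ^ r := by
      split_ifs with h
      · exact ⟨2, two_ne_zero, fun _ => le_rfl, by simp [h]⟩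
      · exact ⟨1, one_ne_zero, fun h' => absurd h' h, (pow_one q).symm⟩
    have hmq := hm q (Nat.mem_primeFactors.mpr ⟨hq, hqD, hD⟩)
    rw [hqr] at hmq
    have hDq : 1 ≤ D.factorization q := hq.factorization_pos_of_dvd hD hqD
    have := padicValNat_le_add_padicValNat_orderOf hr h2 ha hab (q := q)
    simp only [Nat.factorization_mul (pow_ne_zero m hD) ht, Nat.factorization_pow,
      Finsupp.add_apply, Finsupp.smul_apply, smul_eq_mul, Nat.factorization_def _ hq] at hDq ⊢
    have := Nat.le_mul_of_pos_right m hDq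
    omega
  · simp [Nat.factorization_eq_zero_of_not_dvd hqb]

theorem stmt_2_general (a D : ℕ) (ha : 1 < a) (hcop : Nat.Coprime a D)
    (mq : ℕ → ℕ)
    (hmq : ∀ q ∈ D.primeFactors,
      q ^ (mq q) ∣ a ^ (orderOf (a : ZMod (if q = 2 then 4 else q))) - 1 ∧
      ¬ q ^ (mq q + 1) ∣ a ^ (orderOf (a : ZMod (if q = 2 then 4 else q))) - 1)
    (m : ℕ) (hm : m = D.primeFactors.sup mq) :
    ∀ b k : ℕ, 0 < b → 0 < k → b ∣ D ^ k →
      (b : ℝ) * (D : ℝ) ^ (-(m : ℤ)) ≤ (orderOf (a : ZMod b) : ℝ) := by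
  intro b k hb _ hbD
  have hD : D ≠ 0 := by
    rintro rfl
    exact ha.ne' (Nat.coprime_zero_right a |>.mp hcop)
  have hab : a.Coprime b := Nat.Coprime.coprime_dvd_right hbD (hcop.pow_right k)
  have hvm : ∀ q ∈ D.primeFactors,
      padicValNat q (a ^ orderOf (a : ZMod (if q = 2 then 4 else q)) - 1) ≤ m := fun q hq =>
    have : Fact q.Prime := ⟨Nat.prime_of_mem_primeFactors hq⟩
    hm ▸ (padicValNat_le_of_not_pow_succ_dvd (hmq q hq).2).trans (Finset.le_sup hq)
  have : NeZero b := ⟨hb.ne'⟩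
  have hdvd := dvd_pow_mul_orderOf ha hD hab hbD hvm
  have ht : orderOf (a : ZMod b) ≠ 0 := (orderOf_natCast_pos hab).ne'
  rw [zpow_neg, zpow_natCast, ← div_eq_mul_inv, div_le_iff₀ (by positivity)]
  have hle := Nat.le_of_dvd (Nat.pos_of_ne_zero (mul_ne_zero (pow_ne_zero m hD) ht)) hdvd
  exact_mod_cast hle.trans_eq (mul_comm _ _)

theorem stmt_2 (a D : ℕ) (ha : 1 < a) (hD : 1 < D) (hcop : Nat.Coprime a D)
    (mq : ℕ → ℕ)
    (hmq : ∀ q ∈ D.primeFactors,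
      q ^ (mq q) ∣ a ^ (orderOf (a : ZMod (if q = 2 then 4 else q))) - 1 ∧
      ¬ q ^ (mq q + 1) ∣ a ^ (orderOf (a : ZMod (if q = 2 then 4 else q))) - 1)
    (m : ℕ) (hm : m = D.primeFactors.sup mq) :
    ∀ b k : ℕ, 0 < b → 0 < k → b ∣ D ^ k →
      (b : ℝ) * (D : ℝ) ^ (-(m : ℤ)) ≤ (orderOf (a : ZMod b) : ℝ) :=
  stmt_2_general a D ha hcop mq hmq m hm
end

section
/- Let θ(z) = (1+z)/(1−z), and for 0 < r < 1, let U_r denote the image under θ of the closed disk of radius r centered at 0 (a closed disk intersecting the real line orthogonally at θ(−r) and θ(r)). If 0 < r ≤ r' < 1 and s ≥ 1 satisfy θ(−r') ≤ θ(−r)/s, then the set (1/s)·U_r = {w/s : w ∈ U_r} is contained in U_{r'}. -/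
/-!
With `c = (1 - s) / (1 + s)` we have `θ(c) = 1 / s`, and the identity
`θ((c + z) / (1 + c z)) = θ(c) θ(z)` shows that `w ↦ w / s` corresponds, on the disk side, to the
disk automorphism `φ_c(z) = (c + z) / (1 + c z)`. Since `c ≤ 0`, the point of `φ_c(|z| ≤ r)`
farthest from `0` is `φ_c(-r)`, of modulus `(|c| + r) / (1 + |c| r)`, and the hypothesis
`θ(-r') ≤ θ(-r) / s = θ(φ_c(-r))` says exactly that this modulus is at most `r'`.
-/

open Complex ComplexConjugate Metric

theorem cayley_add_div_one_add_mul {K : Type*} [Field K] (c z : K) (hcz : 1 + c * z ≠ 0) :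
    (1 + (c + z) / (1 + c * z)) / (1 - (c + z) / (1 + c * z)) =
      (1 + c) / (1 - c) * ((1 + z) / (1 - z)) := by
  have h_num : 1 + (c + z) / (1 + c * z) = (1 + c) * (1 + z) / (1 + c * z) := by
    field_simp; ring
  have h_den : 1 - (c + z) / (1 + c * z) = (1 - c) * (1 - z) / (1 + c * z) := by
    field_simp; ring
  rw [h_num, h_den, div_div_div_cancel_right₀ hcz, mul_div_mul_comm]

theorem cayley_one_sub_div_one_add {K : Type*} [Field K] [CharZero K] (s : K)
    (hs : 1 + s ≠ 0) : (1 + (1 - s) / (1 + s)) / (1 - (1 - s) / (1 + s)) = s⁻¹ := by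
  have h_num : 1 + (1 - s) / (1 + s) = 2 / (1 + s) := by field_simp; ring
  have h_den : 1 - (1 - s) / (1 + s) = 2 * s / (1 + s) := by field_simp; ring
  rw [h_num, h_den, div_div_div_cancel_right₀ hs, div_mul_cancel_left₀ two_ne_zero]

theorem normSq_one_add_conj_mul_sub_normSq_add (a z : ℂ) :
    normSq (1 + conj a * z) - normSq (a + z) = (1 - normSq a) * (1 - normSq z) := by
  simp only [normSq_apply, add_re, add_im, mul_re, mul_im, conj_re, conj_im, one_re, one_im]
  ring

theorem norm_add_div_one_add_conj_mul_le (a z : ℂ) (ha : ‖a‖ ≤ 1) (hz : ‖z‖ ≤ 1) :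
    ‖(a + z) / (1 + conj a * z)‖ ≤ (‖a‖ + ‖z‖) / (1 + ‖a‖ * ‖z‖) := by
  rcases eq_or_ne (1 + conj a * z) 0 with hD | hD
  · rw [hD, div_zero, norm_zero]; positivity
  have hD_pos : 0 < ‖1 + conj a * z‖ := norm_pos_iff.mpr hD
  have h_tri : ‖1 + conj a * z‖ ≤ 1 + ‖a‖ * ‖z‖ := by
    calc ‖1 + conj a * z‖ ≤ ‖(1 : ℂ)‖ + ‖conj a * z‖ := norm_add_le _ _
      _ = 1 + ‖a‖ * ‖z‖ := by rw [norm_one, norm_mul, RCLike.norm_conj]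
  have h_id := normSq_one_add_conj_mul_sub_normSq_add a z
  simp only [← Complex.sq_norm] at h_id
  have hP : 0 ≤ (1 - ‖a‖ ^ 2) * (1 - ‖z‖ ^ 2) := by
    apply mul_nonneg <;> nlinarith [norm_nonneg a, norm_nonneg z]
  rw [norm_div, div_le_div_iff₀ hD_pos (by positivity),
    ← pow_le_pow_iff_left₀ (by positivity) (by positivity) two_ne_zero]
  -- `(1 + ‖a‖‖z‖)² - (‖a‖ + ‖z‖)² = (1 - ‖a‖²)(1 - ‖z‖²)`, so by `h_id` the goal is `h_tri` squared
  nlinarith [mul_le_mul_of_nonneg_left (pow_le_pow_left₀ hD_pos.le h_tri 2) hP]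

theorem add_div_one_add_mul_le_of_le {a t r : ℝ} (ha₀ : 0 ≤ a) (ha₁ : a ≤ 1) (ht : 0 ≤ t)
    (htr : t ≤ r) : (a + t) / (1 + a * t) ≤ (a + r) / (1 + a * r) := by
  rw [div_le_div_iff₀ (by positivity) (by nlinarith)]
  nlinarith [mul_nonneg (sub_nonneg.2 htr) (sub_nonneg.2 ha₁)]

theorem add_div_one_add_mul_le_of_cayley_neg_le {r r' s : ℝ} (hr : 0 ≤ r) (hr' : -1 < r')
    (hs : 1 ≤ s) (hcond : (1 - r') / (1 + r') ≤ (1 - r) / (1 + r) / s) :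
    ((s - 1) / (s + 1) + r) / (1 + (s - 1) / (s + 1) * r) ≤ r' := by
  rw [div_div, div_le_div_iff₀ (by linarith) (by positivity)] at hcond
  have h_den : 0 < (s + 1) + (s - 1) * r := by nlinarith
  have h_eq : ((s - 1) / (s + 1) + r) / (1 + (s - 1) / (s + 1) * r) =
      ((s - 1) + (s + 1) * r) / ((s + 1) + (s - 1) * r) := by
    field_simp
  rw [h_eq, div_le_iff₀ h_den]
  linarith

theorem stmt_4_general (r r' s : ℝ) (hrr' : r ≤ r') (hr' : r' < 1) (hs : 1 ≤ s)
    (hcond : (1 - r') / (1 + r') ≤ ((1 - r) / (1 + r)) / s) :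
    (fun w : ℂ => w / (s : ℂ)) ''
        ((fun z : ℂ => (1 + z) / (1 - z)) '' Metric.closedBall (0 : ℂ) r) ⊆
      (fun z : ℂ => (1 + z) / (1 - z)) '' Metric.closedBall (0 : ℂ) r' := by
  rintro _ ⟨_, ⟨z, hz, rfl⟩, rfl⟩
  rw [mem_closedBall_zero_iff] at hz
  have hr : 0 ≤ r := (norm_nonneg z).trans hz
  set c : ℝ := (1 - s) / (1 + s) with hc_def
  have hc : ‖(c : ℂ)‖ = (s - 1) / (s + 1) := by
    rw [norm_real, Real.norm_eq_abs, abs_of_nonpos (div_nonpos_of_nonpos_of_nonneg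
      (by linarith) (by linarith)), hc_def, ← neg_div, neg_sub, add_comm]
  have hc_le : ‖(c : ℂ)‖ ≤ 1 := by
    rw [hc, div_le_one (by linarith)]; linarith
  have hcz : 1 + (c : ℂ) * z ≠ 0 := by
    have h_lt : ‖(c : ℂ) * z‖ < 1 := by
      rw [norm_mul]; nlinarith [norm_nonneg (c : ℂ)]
    intro h
    rw [eq_neg_of_add_eq_zero_right h, norm_neg, norm_one] at h_lt
    exact lt_irrefl _ h_lt
  refine ⟨(c + z) / (1 + c * z), mem_closedBall_zero_iff.2 ?_, ?_⟩
  · calc ‖(c + z) / (1 + c * z)‖ = ‖(c + z) / (1 + conj (c : ℂ) * z)‖ := by rw [conj_ofReal]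
      _ ≤ (‖(c : ℂ)‖ + ‖z‖) / (1 + ‖(c : ℂ)‖ * ‖z‖) :=
        norm_add_div_one_add_conj_mul_le _ _ hc_le (by linarith)
      _ ≤ (‖(c : ℂ)‖ + r) / (1 + ‖(c : ℂ)‖ * r) :=
        add_div_one_add_mul_le_of_le (norm_nonneg _) hc_le (norm_nonneg _) hz
      _ ≤ r' := hc ▸ add_div_one_add_mul_le_of_cayley_neg_le hr (by linarith) hs hcond
  · have hθc : (1 + (c : ℂ)) / (1 - c) = (s : ℂ)⁻¹ := by
      push_cast [hc_def]
      exact cayley_one_sub_div_one_add _ (by exact_mod_cast (by linarith : (1 + s : ℝ) ≠ 0))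
    dsimp only
    rw [cayley_add_div_one_add_mul _ _ hcz, hθc, inv_mul_eq_div]

theorem stmt_4 (r r' s : ℝ) (hr : 0 < r) (hrr' : r ≤ r') (hr' : r' < 1) (hs : 1 ≤ s)
    (hcond : (1 - r') / (1 + r') ≤ ((1 - r) / (1 + r)) / s) :
    (fun w : ℂ => w / (s : ℂ)) ''
        ((fun z : ℂ => (1 + z) / (1 - z)) '' Metric.closedBall (0 : ℂ) r) ⊆
      (fun z : ℂ => (1 + z) / (1 - z)) '' Metric.closedBall (0 : ℂ) r' :=
  stmt_4_general r r' s hrr' hr' hs hcond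
end

section
/- Let f be analytic on the open unit disk, let a ≥ e and b > 1 be reals, and let S ⊆ D be a set containing (0,1) on which |f(z)| ≤ a·b^(−1/(1−|z|)). If α ∈ S is an algebraic number such that f(α) is algebraic and nonzero, with [ℚ(α, f(α)):ℚ] ≤ d and multiplicative heights H(α), H(f(α)) ≤ H where d ≥ 2 and H ≥ e, then |α| ≤ 1 − (log b / log a)/(2d·log H). -/
/-!
Liouville's inequality via the Mahler measure: if `P` is the primitive integer minimal
polynomial of an algebraic `β ≠ 0`, then `P(0)` is a nonzero integer, and writing
`P = (X - β) Q` gives `1 ≤ |P(0)| = |β| |Q(0)| ≤ |β| M(Q) ≤ |β| M(P) = |β| H(β)^deg β`.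
Applied to `β = f α`, this lower bound `H^(-d) ≤ |f α|` is played against the decay
`|f α| ≤ a b^(-1/(1-|α|))`; taking logarithms, `log b / (1 - |α|) ≤ log a + d log H`,
and the right side is at most `2 d log a log H` because both logarithms are at least `1`.
-/

/-- The primitive integer polynomial (up to sign) associated to the minimal
polynomial of `α` over `ℚ`. -/
noncomputable def intMinpoly (α : ℂ) : Polynomial ℤ :=
  (IsLocalization.integerNormalization (nonZeroDivisors ℤ) (minpoly ℚ α)).primPart

/-- The absolute multiplicative Weil height of an algebraic number `α : ℂ`,
defined as `(a * ∏ max 1 |z|) ^ (1 / deg)`, where the product runs over the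
complex roots (with multiplicity) of the primitive integer minimal polynomial
of `α`, and `a` is the absolute value of its leading coefficient. -/
noncomputable def multHeight (α : ℂ) : ℝ :=
  ((((intMinpoly α).leadingCoeff.natAbs : ℝ)) *
      (((intMinpoly α).map (Int.castRingHom ℂ)).roots.map
        (fun z => max 1 ‖z‖)).prod) ^
    ((1 : ℝ) / ((intMinpoly α).natDegree : ℝ))

open Polynomial Real

theorem map_primPart_integerNormalization {R K : Type*} [CommRing R] [IsDomain R]
    [NormalizedGCDMonoid R] [Field K] [Algebra R K] [IsFractionRing R K] {p : K[X]}
    (hp : p ≠ 0) :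
    ∃ c : K, c ≠ 0 ∧ (IsLocalization.integerNormalization (nonZeroDivisors R) p).primPart.map
      (algebraMap R K) = C c * p := by
  set q := IsLocalization.integerNormalization (nonZeroDivisors R) p
  obtain ⟨b, hb, hmap⟩ := IsLocalization.integerNormalization_spec (nonZeroDivisors R) p
  have hq : q ≠ 0 := IsFractionRing.integerNormalization_eq_zero_iff.not.mpr hp
  have hcontent : algebraMap R K q.content ≠ 0 :=
    (map_ne_zero_iff _ (IsFractionRing.injective R K)).mpr (content_eq_zero_iff.not.mpr hq)
  have hb0 : algebraMap R K b ≠ 0 :=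
    IsFractionRing.to_map_ne_zero_of_mem_nonZeroDivisors hb
  refine ⟨algebraMap R K b / algebraMap R K q.content, div_ne_zero hb0 hcontent, ?_⟩
  have hsplit := congrArg (map (algebraMap R K)) q.eq_C_content_mul_primPart
  rw [Polynomial.map_mul, map_C, hmap, Algebra.smul_def, Polynomial.algebraMap_apply] at hsplit
  rw [div_eq_inv_mul, C_mul, mul_assoc, hsplit, ← mul_assoc, ← C_mul, inv_mul_cancel₀ hcontent,
    C_1, one_mul]

theorem norm_coeff_zero_le_norm_mul_mahlerMeasure {p : ℂ[X]} {z : ℂ} (hz : p.IsRoot z) :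
    ‖p.coeff 0‖ ≤ ‖z‖ * p.mahlerMeasure := by
  set q := p /ₘ (X - C z)
  have hp : (X - C z) * q = p := mul_divByMonic_eq_iff_isRoot.mpr hz
  have hcoeff : p.coeff 0 = -z * q.coeff 0 := by rw [← hp, mul_coeff_zero]; simp
  calc ‖p.coeff 0‖ = ‖z‖ * ‖q.coeff 0‖ := by rw [hcoeff, norm_mul, norm_neg]
    _ ≤ ‖z‖ * q.mahlerMeasure := by
      gcongr; simpa using norm_coeff_le_choose_mul_mahlerMeasure 0 q
    _ ≤ ‖z‖ * p.mahlerMeasure := by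
      gcongr
      rw [← hp, mahlerMeasure_mul, mahlerMeasure_X_sub_C]
      exact le_mul_of_one_le_left (mahlerMeasure_nonneg _) (le_max_left _ _)

section intMinpoly

variable {β : ℂ}

theorem exists_map_intMinpoly_eq_C_mul_minpoly (hβ : IsAlgebraic ℚ β) :
    ∃ c : ℚ, c ≠ 0 ∧ (intMinpoly β).map (algebraMap ℤ ℚ) = C c * minpoly ℚ β :=
  map_primPart_integerNormalization (minpoly.ne_zero hβ.isIntegral)

theorem natDegree_intMinpoly (hβ : IsAlgebraic ℚ β) :
    (intMinpoly β).natDegree = (minpoly ℚ β).natDegree := by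
  obtain ⟨c, hc, h⟩ := exists_map_intMinpoly_eq_C_mul_minpoly hβ
  rw [← natDegree_map_eq_of_injective (algebraMap ℤ ℚ).injective_int, h, natDegree_C_mul hc]

theorem aeval_intMinpoly (hβ : IsAlgebraic ℚ β) : aeval β (intMinpoly β) = 0 := by
  obtain ⟨c, -, h⟩ := exists_map_intMinpoly_eq_C_mul_minpoly hβ
  rw [← aeval_map_algebraMap ℚ, h, aeval_mul, minpoly.aeval, mul_zero]

theorem coeff_zero_intMinpoly_ne_zero (hβ : IsAlgebraic ℚ β) (h0 : β ≠ 0) :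
    (intMinpoly β).coeff 0 ≠ 0 := by
  obtain ⟨c, hc, h⟩ := exists_map_intMinpoly_eq_C_mul_minpoly hβ
  intro hz
  have := congrArg (coeff · 0) h
  simp [hz, hc, minpoly.coeff_zero_ne_zero hβ.isIntegral h0] at this

theorem multHeight_eq_mahlerMeasure_rpow (β : ℂ) :
    multHeight β = ((intMinpoly β).map (Int.castRingHom ℂ)).mahlerMeasure ^
      (1 / ((intMinpoly β).natDegree : ℝ)) := by
  rw [multHeight, mahlerMeasure_eq_leadingCoeff_mul_prod_roots,
    leadingCoeff_map_of_injective Int.cast_injective]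
  simp

theorem mahlerMeasure_intMinpoly_le {H : ℝ} (hβ : IsAlgebraic ℚ β) (hH : multHeight β ≤ H) :
    ((intMinpoly β).map (Int.castRingHom ℂ)).mahlerMeasure ≤ H ^ (intMinpoly β).natDegree := by
  have hn : (intMinpoly β).natDegree ≠ 0 := by
    rw [natDegree_intMinpoly hβ]; exact (minpoly.natDegree_pos hβ.isIntegral).ne'
  have hnonneg : 0 ≤ multHeight β := by
    rw [multHeight_eq_mahlerMeasure_rpow]; exact Real.rpow_nonneg (mahlerMeasure_nonneg _) _
  calc _ = multHeight β ^ (intMinpoly β).natDegree := by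
        rw [multHeight_eq_mahlerMeasure_rpow, one_div,
          Real.rpow_inv_natCast_pow (mahlerMeasure_nonneg _) hn]
    _ ≤ H ^ (intMinpoly β).natDegree := pow_le_pow_left₀ hnonneg hH _

theorem one_le_norm_mul_pow_of_multHeight_le {d : ℕ} {H : ℝ} (hβ : IsAlgebraic ℚ β)
    (h0 : β ≠ 0) (hdeg : (minpoly ℚ β).natDegree ≤ d) (hH1 : 1 ≤ H)
    (hH : multHeight β ≤ H) : 1 ≤ ‖β‖ * H ^ d := by
  set P := (intMinpoly β).map (Int.castRingHom ℂ)
  have hroot : P.IsRoot β := by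
    rw [IsRoot.def, eval_map, ← algebraMap_int_eq, ← aeval_def]; exact aeval_intMinpoly hβ
  calc (1 : ℝ) ≤ ‖P.coeff 0‖ := by
        rw [coeff_map, eq_intCast, Complex.norm_intCast]
        exact_mod_cast Int.one_le_abs (coeff_zero_intMinpoly_ne_zero hβ h0)
    _ ≤ ‖β‖ * P.mahlerMeasure := norm_coeff_zero_le_norm_mul_mahlerMeasure hroot
    _ ≤ ‖β‖ * H ^ (intMinpoly β).natDegree := by gcongr; exact mahlerMeasure_intMinpoly_le hβ hH
    _ ≤ ‖β‖ * H ^ d := by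
      gcongr
      rwa [natDegree_intMinpoly hβ]

end intMinpoly

theorem natDegree_minpoly_le_finrank {F E : Type*} [Field F] [Field E] [Algebra F E]
    {K : IntermediateField F E} [FiniteDimensional F K] {x : E} (hx : x ∈ K) :
    (minpoly F x).natDegree ≤ Module.finrank F K :=
  IntermediateField.minpoly_eq (⟨x, hx⟩ : K) ▸ minpoly.natDegree_le _

theorem le_one_sub_of_one_le_mul_rpow_mul_pow {a b H r : ℝ} {d : ℕ} (ha : exp 1 ≤ a) (hb : 1 < b)
    (hH : exp 1 ≤ H) (hd : 1 ≤ d) (hr : r < 1)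
    (h : 1 ≤ a * b ^ (-(1 / (1 - r))) * H ^ d) :
    r ≤ 1 - (log b / log a) / (2 * d * log H) := by
  have hLa : 1 ≤ log a := (le_log_iff_exp_le ((exp_pos 1).trans_le ha)).mpr ha
  have hLH : 1 ≤ log H := (le_log_iff_exp_le ((exp_pos 1).trans_le hH)).mpr hH
  have hd' : (1 : ℝ) ≤ d := by exact_mod_cast hd
  have ha0 : 0 < a := (exp_pos 1).trans_le ha
  have hH0 : 0 < H := (exp_pos 1).trans_le hH
  have hb0 : 0 < b := one_pos.trans hb
  have ht : 0 < 1 - r := by linarith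
  have hlog : log b / (1 - r) ≤ log a + d * log H := by
    have := log_nonneg h
    rw [log_mul (by positivity) (by positivity), log_mul (by positivity) (by positivity),
      log_rpow (by positivity), log_pow] at this
    rw [div_eq_mul_one_div, mul_comm]
    linarith
  have hdLH : 1 ≤ d * log H := one_le_mul_of_one_le_of_one_le hd' hLH
  have hsum : log a + d * log H ≤ log a * (2 * d * log H) := by
    nlinarith [mul_nonneg (sub_nonneg.mpr hdLH) (sub_nonneg.mpr hLa)]
  rw [div_le_iff₀ ht] at hlog
  rw [le_sub_comm, div_div, div_le_iff₀ (by positivity), mul_comm]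
  exact hlog.trans (by gcongr)

theorem stmt_5_general (f : ℂ → ℂ)
    (a b : ℝ) (ha : Real.exp 1 ≤ a) (hb : 1 < b)
    (S : Set ℂ) (hS : S ⊆ Metric.ball (0 : ℂ) 1)
    (hdecay : ∀ z ∈ S, ‖f z‖ ≤ a * b ^ (-(1 / (1 - ‖z‖))))
    (α : ℂ) (hα : α ∈ S) (halgα : IsAlgebraic ℚ α) (halgf : IsAlgebraic ℚ (f α))
    (hfα0 : f α ≠ 0)
    (d : ℕ) (hd : 2 ≤ d)
    (hdeg : Module.finrank ℚ
      (IntermediateField.adjoin ℚ {α, f α} : IntermediateField ℚ ℂ) ≤ d)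
    (H : ℝ) (hH : Real.exp 1 ≤ H)
    (hHfα : multHeight (f α) ≤ H) :
    ‖α‖ ≤ 1 - (Real.log b / Real.log a) / (2 * d * Real.log H) := by
  have hα1 : ‖α‖ < 1 := mem_ball_zero_iff.mp (hS hα)
  have : FiniteDimensional ℚ (IntermediateField.adjoin ℚ {α, f α}) :=
    IntermediateField.finiteDimensional_adjoin_pair halgα.isIntegral halgf.isIntegral
  have hdegf : (minpoly ℚ (f α)).natDegree ≤ d :=
    (natDegree_minpoly_le_finrank (IntermediateField.subset_adjoin ℚ _ (by simp))).trans hdeg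
  have hH1 : 1 ≤ H := one_le_exp zero_le_one |>.trans hH
  have hlower : 1 ≤ ‖f α‖ * H ^ d :=
    one_le_norm_mul_pow_of_multHeight_le halgf hfα0 hdegf hH1 hHfα
  refine le_one_sub_of_one_le_mul_rpow_mul_pow ha hb hH (by omega) hα1 ?_
  exact hlower.trans (by gcongr; exact hdecay α hα)

theorem stmt_5 (f : ℂ → ℂ) (hf : DifferentiableOn ℂ f (Metric.ball (0 : ℂ) 1))
    (a b : ℝ) (ha : Real.exp 1 ≤ a) (hb : 1 < b)
    (S : Set ℂ) (hS : S ⊆ Metric.ball (0 : ℂ) 1)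
    (hS01 : ∀ x : ℝ, 0 < x → x < 1 → (x : ℂ) ∈ S)
    (hdecay : ∀ z ∈ S, ‖f z‖ ≤ a * b ^ (-(1 / (1 - ‖z‖))))
    (α : ℂ) (hα : α ∈ S) (halgα : IsAlgebraic ℚ α) (halgf : IsAlgebraic ℚ (f α))
    (hfα0 : f α ≠ 0)
    (d : ℕ) (hd : 2 ≤ d)
    (hdeg : Module.finrank ℚ
      (IntermediateField.adjoin ℚ {α, f α} : IntermediateField ℚ ℂ) ≤ d)
    (H : ℝ) (hH : Real.exp 1 ≤ H)
    (hHα : multHeight α ≤ H) (hHfα : multHeight (f α) ≤ H) :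
    ‖α‖ ≤ 1 - (Real.log b / Real.log a) / (2 * d * Real.log H) :=
  stmt_5_general f a b ha hb S hS hdecay α hα halgα halgf hfα0 d hd hdeg H hH hHfα
end
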